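/- If the system (D,H,A) is output s-sparse-controllable, then s ≥ m − rank(AD) and, for every λ ∈ ℂ, the m×(N+L) complex block matrix A·[λI − D | H] has rank m. -/

import Mathlib

open Matrix

/-- `h` is `s`-sparse: at most `s` nonzero entries. -/
def IsSparse {L : ℕ} (s : ℕ) (h : Fin L → ℝ) : Prop :=
  {i : Fin L | h i ≠ 0}.ncard ≤ s

/-- Inputs `h 0, …, h (K-1)` steer the state `xinit` to `xfinal`:
`xfinal − D^K xinit = ∑_{k=1}^{K} D^{K−k} H h_k`. -/
def Steers {N L : ℕ} (D : Matrix (Fin N) (Fin N) ℝ) (H : Matrix (Fin N) (Fin L) ℝ)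
    (K : ℕ) (h : Fin K → Fin L → ℝ) (xinit xfinal : Fin N → ℝ) : Prop :=
  xfinal - (D ^ K) *ᵥ xinit = ∑ k : Fin K, (D ^ (K - 1 - (k : ℕ))) *ᵥ (H *ᵥ h k)

/-- The system `(D, H)` is `s`-sparse-controllable. -/
def SparseControllable (N L s : ℕ) (D : Matrix (Fin N) (Fin N) ℝ)
    (H : Matrix (Fin N) (Fin L) ℝ) : Prop :=
  ∀ xinit xfinal : Fin N → ℝ, ∃ K : ℕ, 0 < K ∧ ∃ h : Fin K → Fin L → ℝ,
    (∀ k, IsSparse s (h k)) ∧ Steers D H K h xinit xfinal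

/-- Output controllability with unconstrained inputs, for outputs `y_k = A x_k`. -/
def OutputControllable (N L m : ℕ) (D : Matrix (Fin N) (Fin N) ℝ)
    (H : Matrix (Fin N) (Fin L) ℝ) (A : Matrix (Fin m) (Fin N) ℝ) : Prop :=
  ∀ (x0 : Fin N → ℝ) (yfinal : Fin m → ℝ), ∃ K : ℕ, 0 < K ∧ ∃ h : Fin K → Fin L → ℝ,
    yfinal - A *ᵥ ((D ^ K) *ᵥ x0)
      = ∑ k : Fin K, A *ᵥ ((D ^ (K - 1 - (k : ℕ))) *ᵥ (H *ᵥ h k))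

/-- Output `s`-sparse-controllability for outputs `y_k = A x_k`. -/
def OutputSparseControllable (N L m s : ℕ) (D : Matrix (Fin N) (Fin N) ℝ)
    (H : Matrix (Fin N) (Fin L) ℝ) (A : Matrix (Fin m) (Fin N) ℝ) : Prop :=
  ∀ (x0 : Fin N → ℝ) (yfinal : Fin m → ℝ), ∃ K : ℕ, 0 < K ∧ ∃ h : Fin K → Fin L → ℝ,
    (∀ k, IsSparse s (h k)) ∧
    yfinal - A *ᵥ ((D ^ K) *ᵥ x0)
      = ∑ k : Fin K, A *ᵥ ((D ^ (K - 1 - (k : ℕ))) *ᵥ (H *ᵥ h k))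

/-- PBH block matrix `[λ I − D | H]` over `ℂ` (entrywise complexification). -/
noncomputable def pbhMatrix {N L : ℕ} (D : Matrix (Fin N) (Fin N) ℝ)
    (H : Matrix (Fin N) (Fin L) ℝ) (lam : ℂ) : Matrix (Fin N) (Fin N ⊕ Fin L) ℂ :=
  Matrix.fromCols (lam • (1 : Matrix (Fin N) (Fin N) ℂ) - D.map Complex.ofReal)
    (H.map Complex.ofReal)

/-! If every output is reachable from `x₀ = 0`, then every `y` is `A D u + A H h` with `h`
`s`-sparse (split off the last input), so `ℝ^m` is a finite union of the subspaces
`range (A D) + span {columns of A H indexed by S}`, `|S| ≤ s`; over an infinite field one of them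
is everything, which bounds `m` by `rank (A D) + s`. If `z ≠ 0` kills `A [λI − D | H]`, then
`w = z A` is a left eigenvector of `D` with `w H = 0`, so `w Dᵉ H = 0` for every `e` and `z`
annihilates every reachable output, i.e. all of `ℝ^m`. -/

namespace Matrix

variable {R K m n : Type*}

theorem mulVec_mem_span_col_image [CommSemiring R] [Fintype n] (M : Matrix m n R) (v : n → R) :
    M *ᵥ v ∈ Submodule.span R (M.col '' {j | v j ≠ 0}) := by
  rw [mulVec_eq_sum]
  refine Submodule.sum_mem _ fun j _ => ?_
  by_cases hv : v j = 0
  · simp [hv]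
  · rw [op_smul_eq_smul]
    exact Submodule.smul_mem _ _ (Submodule.subset_span ⟨j, hv, rfl⟩)

theorem vecMul_pow_of_vecMul_eq_smul [CommSemiring R] [Fintype n] [DecidableEq n]
    {D : Matrix n n R} {w : n → R} {c : R} (h : w ᵥ* D = c • w) (e : ℕ) :
    w ᵥ* D ^ e = c ^ e • w := by
  induction e with
  | zero => simp
  | succ e ih => rw [pow_succ, ← vecMul_vecMul, ih, smul_vecMul, h, smul_smul, pow_succ]

theorem rank_eq_card_of_vecMul_eq_zero [Field K] [Fintype m] [Fintype n] {M : Matrix m n K}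
    (h : ∀ z, z ᵥ* M = 0 → z = 0) : M.rank = Fintype.card m :=
  LinearIndependent.rank_matrix <| vecMul_injective_iff.mp <|
    (injective_iff_map_eq_zero M.vecMulLinear).mpr h

theorem sum_pow_sub_mulVec_succ [Semiring R] [Fintype n] [DecidableEq n] (D : Matrix n n R)
    {K : ℕ} (g : Fin (K + 1) → n → R) :
    ∑ k : Fin (K + 1), D ^ (K - k) *ᵥ g k
      = D *ᵥ ∑ k : Fin K, D ^ (K - 1 - k) *ᵥ g k.castSucc + g (Fin.last K) := by
  rw [Fin.sum_univ_castSucc, mulVec_sum]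
  congr 1
  · refine Finset.sum_congr rfl fun k _ => ?_
    rw [mulVec_mulVec, ← pow_succ']
    congr 2
    simp only [Fin.val_castSucc]
    omega
  · simp

end Matrix

theorem Submodule.finrank_le_finrank_add_of_forall_mem_sup_span {K V ι : Type*} [Field K]
    [Infinite K] [AddCommGroup V] [Module K V] [FiniteDimensional K V] [Finite ι]
    (W : Submodule K V) (f : ι → V) (s : ℕ)
    (h : ∀ x, ∃ S : Finset ι, S.card ≤ s ∧ x ∈ W ⊔ Submodule.span K (f '' S)) :
    Module.finrank K V ≤ Module.finrank K W + s := by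
  classical
  obtain ⟨⟨S, hS⟩, htop⟩ := Subspace.exists_eq_top_of_iUnion_eq_univ
    (p := fun S : {S : Finset ι // S.card ≤ s} =>
      (W ⊔ Submodule.span K (f '' S.1) : Submodule K V))
    (Set.eq_univ_of_forall fun x => Set.mem_iUnion.2 <|
      let ⟨S, hS, hx⟩ := h x; ⟨⟨S, hS⟩, hx⟩)
  calc Module.finrank K V = Module.finrank K ↥(W ⊔ Submodule.span K (f '' S)) := by
        rw [htop, finrank_top]
    _ ≤ Module.finrank K W + Module.finrank K (Submodule.span K (f '' S)) :=
        Submodule.finrank_add_le_finrank_add_finrank _ _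
    _ ≤ Module.finrank K W + s := by
        rw [← Finset.coe_image]
        gcongr
        exact (finrank_span_finset_le_card _).trans (Finset.card_image_le.trans hS)

theorem Matrix.card_le_rank_add_of_forall_eq_mulVec_add_mulVec {K m n ι : Type*} [Field K]
    [Infinite K] [Fintype m] [Fintype n] [Fintype ι] (P : Matrix m n K) (Q : Matrix m ι K)
    (s : ℕ) (h : ∀ y, ∃ u v, {j | v j ≠ 0}.ncard ≤ s ∧ y = P *ᵥ u + Q *ᵥ v) :
    Fintype.card m ≤ P.rank + s := by
  classical
  rw [← Module.finrank_fintype_fun_eq_card K]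
  refine Submodule.finrank_le_finrank_add_of_forall_mem_sup_span _ Q.col s fun y => ?_
  obtain ⟨u, v, hv, rfl⟩ := h y
  refine ⟨{j | v j ≠ 0}.toFinset, by rwa [← Set.ncard_eq_toFinset_card'], ?_⟩
  rw [Set.coe_toFinset]
  exact Submodule.add_mem_sup (LinearMap.mem_range_self _ u) (Q.mulVec_mem_span_col_image v)

theorem dotProduct_ofReal_mulVec_eq_zero {ι κ : Type*} [Fintype ι] [Fintype κ]
    {M : Matrix ι κ ℝ} {z : ι → ℂ} (hz : z ᵥ* M.map Complex.ofReal = 0) (v : κ → ℝ) :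
    z ⬝ᵥ (fun i => ((M *ᵥ v) i : ℂ)) = 0 := by
  have hmap : (fun i => ((M *ᵥ v) i : ℂ)) = M.map Complex.ofReal *ᵥ (fun j => (v j : ℂ)) :=
    funext (Complex.ofRealHom.map_mulVec M v)
  rw [hmap, dotProduct_mulVec, hz, zero_dotProduct]

section OutputControllability

variable {N L m s : ℕ} {D : Matrix (Fin N) (Fin N) ℝ} {H : Matrix (Fin N) (Fin L) ℝ}
  {A : Matrix (Fin m) (Fin N) ℝ}

theorem OutputSparseControllable.outputControllable
    (hctrl : OutputSparseControllable N L m s D H A) : OutputControllable N L m D H A :=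
  fun x0 y => let ⟨K, hK, h, _, hy⟩ := hctrl x0 y; ⟨K, hK, h, hy⟩

theorem OutputSparseControllable.exists_eq_mulVec_add_mulVec
    (hctrl : OutputSparseControllable N L m s D H A) (y : Fin m → ℝ) :
    ∃ u v, IsSparse s v ∧ y = (A * D) *ᵥ u + (A * H) *ᵥ v := by
  obtain ⟨K, hK, h, hsparse, hy⟩ := hctrl 0 y
  obtain ⟨K, rfl⟩ := Nat.exists_eq_add_one_of_ne_zero hK.ne'
  simp only [mulVec_zero, sub_zero, add_tsub_cancel_right, ← mulVec_sum] at hy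
  rw [sum_pow_sub_mulVec_succ, mulVec_add, mulVec_mulVec] at hy
  exact ⟨_, _, hsparse (Fin.last K), by rw [hy, mulVec_mulVec]⟩

theorem OutputControllable.eq_zero_of_forall_vecMul_map_eq_zero
    (hctrl : OutputControllable N L m D H A) {z : Fin m → ℂ}
    (hz : ∀ e, z ᵥ* (A * D ^ e * H).map Complex.ofReal = 0) : z = 0 := by
  funext i
  obtain ⟨K, -, h, hy⟩ := hctrl 0 (Pi.single i 1)
  simp only [mulVec_zero, sub_zero, mulVec_mulVec] at hy
  have hsingle : (fun j => ((Pi.single i 1 : Fin m → ℝ) j : ℂ)) = Pi.single i 1 := by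
    ext j
    by_cases hj : j = i <;> simp [hj]
  calc z i = z ⬝ᵥ (fun j => ((Pi.single i 1 : Fin m → ℝ) j : ℂ)) := by
        rw [hsingle, dotProduct_single, mul_one]
    _ = ∑ k : Fin K, z ⬝ᵥ (fun j => (((A * D ^ (K - 1 - k) * H) *ᵥ h k) j : ℂ)) := by
        rw [hy, ← dotProduct_sum]
        congr 1
        ext j
        simp [Finset.sum_apply, Matrix.mul_assoc]
    _ = 0 := Finset.sum_eq_zero fun k _ => dotProduct_ofReal_mulVec_eq_zero (hz _) _

theorem vecMul_map_mul_pow_mul_eq_zero_of_vecMul_pbhMatrix {lam : ℂ} {z : Fin m → ℂ}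
    (hz : z ᵥ* (A.map Complex.ofReal * pbhMatrix D H lam) = 0) (e : ℕ) :
    z ᵥ* (A * D ^ e * H).map Complex.ofReal = 0 := by
  rw [← vecMul_vecMul, pbhMatrix, vecMul_fromCols] at hz
  set w := z ᵥ* A.map Complex.ofReal
  have hH : w ᵥ* H.map Complex.ofReal = 0 := funext fun j => congrFun hz (Sum.inr j)
  have hD : w ᵥ* D.map Complex.ofReal = lam • w := by
    have h : w ᵥ* (lam • 1 - D.map Complex.ofReal) = 0 := funext fun j => congrFun hz (Sum.inl j)
    rwa [vecMul_sub, vecMul_smul, vecMul_one, sub_eq_zero, eq_comm] at h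
  have hmap : (A * D ^ e * H).map Complex.ofReal
      = A.map Complex.ofReal * D.map Complex.ofReal ^ e * H.map Complex.ofReal := by
    have hpow : (D ^ e).map Complex.ofReal = D.map Complex.ofReal ^ e :=
      map_pow Complex.ofRealHom.mapMatrix D e
    rw [← hpow]
    exact (Matrix.map_mul (f := Complex.ofRealHom)).trans
      (congrArg (· * _) (Matrix.map_mul (f := Complex.ofRealHom)))
  rw [hmap, ← vecMul_vecMul, ← vecMul_vecMul, vecMul_pow_of_vecMul_eq_smul hD, smul_vecMul, hH,
    smul_zero]

end OutputControllability

theorem output_sparse_controllable_necessary_general (N L m s : ℕ)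
    (D : Matrix (Fin N) (Fin N) ℝ) (H : Matrix (Fin N) (Fin L) ℝ)
    (A : Matrix (Fin m) (Fin N) ℝ)
    (hctrl : OutputSparseControllable N L m s D H A) :
    m - (A * D).rank ≤ s ∧
    ∀ lam : ℂ, (A.map Complex.ofReal * pbhMatrix D H lam).rank = m := by
  refine ⟨?_, fun lam => ?_⟩
  · have hcard := Matrix.card_le_rank_add_of_forall_eq_mulVec_add_mulVec (A * D) (A * H) s
      hctrl.exists_eq_mulVec_add_mulVec
    rw [Fintype.card_fin] at hcard
    omega
  · have hrank := Matrix.rank_eq_card_of_vecMul_eq_zero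
      (M := A.map Complex.ofReal * pbhMatrix D H lam) fun z hz =>
      hctrl.outputControllable.eq_zero_of_forall_vecMul_map_eq_zero
        (vecMul_map_mul_pow_mul_eq_zero_of_vecMul_pbhMatrix hz)
    rwa [Fintype.card_fin] at hrank

/-- Necessary conditions for output `s`-sparse-controllability:
`s ≥ m − rank(AD)` and `A · [λI − D | H]` has rank `m` for every `λ ∈ ℂ`. -/
theorem output_sparse_controllable_necessary (N L m s : ℕ) (hN : 0 < N) (hL : 0 < L)
    (hm : 0 < m) (hs : 0 < s) (hsL : s ≤ L)
    (D : Matrix (Fin N) (Fin N) ℝ) (H : Matrix (Fin N) (Fin L) ℝ)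
    (A : Matrix (Fin m) (Fin N) ℝ)
    (hctrl : OutputSparseControllable N L m s D H A) :
    m - (A * D).rank ≤ s ∧
    ∀ lam : ℂ, (A.map Complex.ofReal * pbhMatrix D H lam).rank = m :=
  output_sparse_controllable_necessary_general N L m s D H A hctrl
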